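/- arXiv:1806.01664 — 3 statements merged into one kernel-verified Lean document; each statement's English description precedes it below -/
import Mathlib

section
/- Merging two clusters a, b of a partition C increases the γ-modularity if and only if γ < 1/d(a,b): precisely, Q_γ(C') − Q_γ(C) = 2(p(a,b) − γ·p(a)p(b)), where C' is obtained from C by replacing a and b with a∪b; this quantity is positive iff γ·d(a,b) < 1 (assuming p(a,b) > 0 and p(a),p(b) > 0). -/
open Finset

variable {V : Type*} [Fintype V] [DecidableEq V]

/-- Total weight of the graph. -/
noncomputable def totalW (A : V → V → ℝ) : ℝ := ∑ i, ∑ j, A i j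

/-- Joint sampling probability of a node pair. -/
noncomputable def pN (A : V → V → ℝ) (i j : V) : ℝ := A i j / totalW A

/-- Marginal sampling probability of a node. -/
noncomputable def pMarg (A : V → V → ℝ) (i : V) : ℝ := ∑ j, pN A i j

/-- Pair-sampling probability of two clusters. -/
noncomputable def pPair (A : V → V → ℝ) (a b : Finset V) : ℝ :=
  ∑ i ∈ a, ∑ j ∈ b, pN A i j

/-- Marginal probability of a cluster. -/
noncomputable def pClus (A : V → V → ℝ) (a : Finset V) : ℝ :=
  ∑ i ∈ a, pMarg A i

/-- Distance between clusters. -/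
noncomputable def dClus (A : V → V → ℝ) (a b : Finset V) : ℝ :=
  pClus A a * pClus A b / pPair A a b

/-- `C` is a partition of `V`: pairwise disjoint nonempty clusters covering `V`. -/
def IsPartition (C : Finset (Finset V)) : Prop :=
  (∀ a ∈ C, a.Nonempty) ∧
  (∀ a ∈ C, ∀ b ∈ C, a ≠ b → Disjoint a b) ∧
  C.biUnion id = Finset.univ

/-- Generalized modularity of a partition. -/
noncomputable def modQ (A : V → V → ℝ) (γ : ℝ) (C : Finset (Finset V)) : ℝ :=
  ∑ a ∈ C, (pPair A a a - γ * pClus A a ^ 2)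

/-- Merging two clusters changes the `γ`-modularity by `2(p(a,b) - γ p(a)p(b))`,
which is positive iff `γ · d(a,b) < 1`. -/
theorem modularity_merge (A : V → V → ℝ) (γ : ℝ)
    (hsym : ∀ i j, A i j = A j i) (hnn : ∀ i j, 0 ≤ A i j) (hw : 0 < totalW A)
    (C : Finset (Finset V)) (hC : IsPartition C)
    (a b : Finset V) (haC : a ∈ C) (hbC : b ∈ C) (hab : a ≠ b)
    (hpa : 0 < pClus A a) (hpb : 0 < pClus A b) (hpab : 0 < pPair A a b) :
    modQ A γ (insert (a ∪ b) ((C.erase a).erase b)) - modQ A γ C =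
      2 * (pPair A a b - γ * (pClus A a * pClus A b)) ∧
    (0 < modQ A γ (insert (a ∪ b) ((C.erase a).erase b)) - modQ A γ C ↔
      γ * dClus A a b < 1) := by

  obtain ⟨hne, hdisj, hcov⟩ := hC
  have hdab : Disjoint a b := hdisj a haC b hbC hab
  have hnotin : a ∪ b ∉ (C.erase a).erase b := by
    intro h
    have hc : a ∪ b ∈ C := Finset.mem_of_mem_erase (Finset.mem_of_mem_erase h)
    have hne' : a ∪ b ≠ a := Finset.ne_of_mem_erase (Finset.mem_of_mem_erase h)
    have hd : Disjoint (a ∪ b) a := hdisj _ hc a haC hne'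
    obtain ⟨x, hx⟩ := hne a haC
    exact Finset.disjoint_left.mp hd (Finset.mem_union_left b hx) hx
  have hPab : pPair A b a = pPair A a b := by
    unfold pPair
    rw [Finset.sum_comm]
    exact Finset.sum_congr rfl fun i _ => Finset.sum_congr rfl fun j _ => by
      unfold pN; rw [hsym]
  have hU : pPair A (a ∪ b) (a ∪ b) =
      pPair A a a + pPair A a b + (pPair A b a + pPair A b b) := by
    unfold pPair
    rw [Finset.sum_union hdab]
    congr 1 <;>
    · rw [← Finset.sum_add_distrib]
      exact Finset.sum_congr rfl fun i _ => Finset.sum_union hdab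
  have hClusU : pClus A (a ∪ b) = pClus A a + pClus A b := by
    unfold pClus; exact Finset.sum_union hdab
  have hbC' : b ∈ C.erase a := Finset.mem_erase.mpr ⟨hab.symm, hbC⟩
  have hQC : modQ A γ C = (pPair A a a - γ * pClus A a ^ 2) +
      ((pPair A b b - γ * pClus A b ^ 2) + modQ A γ ((C.erase a).erase b)) := by
    unfold modQ
    rw [← Finset.add_sum_erase _ _ haC, ← Finset.add_sum_erase _ _ hbC']
  have hmain : modQ A γ (insert (a ∪ b) ((C.erase a).erase b)) - modQ A γ C =
      2 * (pPair A a b - γ * (pClus A a * pClus A b)) := by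
    unfold modQ
    rw [Finset.sum_insert hnotin]
    show (pPair A (a ∪ b) (a ∪ b) - γ * pClus A (a ∪ b) ^ 2) +
      modQ A γ ((C.erase a).erase b) - modQ A γ C = _
    rw [hQC, hU, hClusU, hPab]
    ring
  refine ⟨hmain, ?_⟩
  rw [hmain]
  have hiff : γ * dClus A a b < 1 ↔ γ * (pClus A a * pClus A b) < pPair A a b := by
    unfold dClus
    rw [mul_div_assoc', div_lt_one hpab]
  rw [hiff]
  constructor <;> intro h <;> linarith
end

section
/- Pointed version of reducibility: if clusters a and b are mutual nearest neighbors among a collection of pairwise disjoint clusters (i.e., d(a,b) ≤ d(a,c) and d(a,b) ≤ d(b,c) for all other clusters c in the collection), then after merging, d(a∪b, c) ≥ d(a,b) for every other cluster c in the collection (with finite distances interpreted via p(·,·) > 0). -/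
open Finset

variable {V : Type*} [Fintype V] [DecidableEq V]

/-- Pointed reducibility: if `a` and `b` are mutual nearest neighbors in a collection of
pairwise disjoint clusters, then the merged cluster `a ∪ b` is at distance at least `d(a,b)`
from every other cluster (infinite distances, i.e. `p(·,·) = 0`, trivially satisfy this). -/
theorem pointed_reducibility (A : V → V → ℝ)
    (hsym : ∀ i j, A i j = A j i) (hnn : ∀ i j, 0 ≤ A i j) (hw : 0 < totalW A)
    (S : Finset (Finset V))
    (hdisj : ∀ x ∈ S, ∀ y ∈ S, x ≠ y → Disjoint x y)
    (a b : Finset V) (haS : a ∈ S) (hbS : b ∈ S) (hab : a ≠ b)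
    (hpa : 0 < pClus A a) (hpb : 0 < pClus A b)
    (hpS : ∀ c ∈ S, 0 < pClus A c)
    (hpab : 0 < pPair A a b)
    (hnn₁ : ∀ c ∈ S, c ≠ a → c ≠ b → 0 < pPair A a c → dClus A a b ≤ dClus A a c)
    (hnn₂ : ∀ c ∈ S, c ≠ a → c ≠ b → 0 < pPair A b c → dClus A a b ≤ dClus A b c) :
    ∀ c ∈ S, c ≠ a → c ≠ b → 0 < pPair A (a ∪ b) c → dClus A a b ≤ dClus A (a ∪ b) c := by
  intro c hcS hca hcb hpos
  have hpc := hpS c hcS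
  have hdab : Disjoint a b := hdisj a haS b hbS hab
  have hclus : pClus A (a ∪ b) = pClus A a + pClus A b := by
    simp [pClus, Finset.sum_union hdab]
  have hpair : pPair A (a ∪ b) c = pPair A a c + pPair A b c := by
    simp [pPair, Finset.sum_union hdab]
  have hd : 0 < dClus A a b := div_pos (mul_pos hpa hpb) hpab
  have hPnn : ∀ x y : Finset V, 0 ≤ pPair A x y := by
    intro x y
    apply Finset.sum_nonneg; intro i _
    apply Finset.sum_nonneg; intro j _
    exact div_nonneg (hnn i j) hw.le
  have key : ∀ (x : Finset V), 0 < pClus A x →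
      (0 < pPair A x c → dClus A a b ≤ dClus A x c) →
      pPair A x c * dClus A a b ≤ pClus A x * pClus A c := by
    intro x hpx hle
    rcases lt_or_eq_of_le (hPnn x c) with h | h
    · have := hle h
      simp only [dClus] at this ⊢
      rw [le_div_iff₀ h] at this
      linarith
    · rw [← h, zero_mul]
      positivity
  have h1 := key a hpa (hnn₁ c hcS hca hcb)
  have h2 := key b hpb (hnn₂ c hcS hca hcb)
  rw [hpair] at hpos
  simp only [dClus] at h1 h2 ⊢
  rw [hclus, hpair, le_div_iff₀ hpos]
  nlinarith
end

section
/- If two disjoint clusters a and b have no edge between them and to a third disjoint cluster c both distances d(a,c) and d(b,c) are finite, then d(a∪b,c) is a convex-weight harmonic combination which simplifies: since p(a∪b,c) = p(a,c) + p(b,c), d(a∪b,c) = (p(a)+p(b))·p(c)/(p(a,c)+p(b,c)), and this is strictly greater than min(d(a,c), d(b,c)) whenever d(a,c) ≠ d(b,c). -/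
open Finset

variable {V : Type*} [Fintype V] [DecidableEq V]

/-! Disjointness makes `pClus` and `pPair` additive, so `d(a ∪ b, c)` is the mediant of the
fractions `p(a)p(c)/p(a,c)` and `p(b)p(c)/p(b,c)`, which lies strictly between them when they
differ. -/

section Mediant

variable {K : Type*} [Field K] [LinearOrder K] [IsStrictOrderedRing K] {p q x y : K}

theorem div_lt_add_div_add (hx : 0 < x) (hy : 0 < y) (h : p / x < q / y) :
    p / x < (p + q) / (x + y) := by
  rw [div_lt_div_iff₀ hx hy] at h
  rw [div_lt_div_iff₀ hx (add_pos hx hy)]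
  linarith

theorem min_div_div_lt_add_div_add (hx : 0 < x) (hy : 0 < y) (hne : p / x ≠ q / y) :
    min (p / x) (q / y) < (p + q) / (x + y) := by
  rcases hne.lt_or_gt with h | h
  · rw [min_eq_left h.le]
    exact div_lt_add_div_add hx hy h
  · rw [min_eq_right h.le, add_comm p, add_comm x]
    exact div_lt_add_div_add hy hx h

end Mediant

section Union

variable (A : V → V → ℝ) {a b : Finset V}

theorem pClus_union (hab : Disjoint a b) : pClus A (a ∪ b) = pClus A a + pClus A b :=
  sum_union hab

theorem pPair_union_left (hab : Disjoint a b) (c : Finset V) :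
    pPair A (a ∪ b) c = pPair A a c + pPair A b c :=
  sum_union hab

theorem dClus_union_left (hab : Disjoint a b) (c : Finset V) :
    dClus A (a ∪ b) c = (pClus A a + pClus A b) * pClus A c / (pPair A a c + pPair A b c) := by
  rw [dClus, pClus_union A hab, pPair_union_left A hab]

end Union

theorem merge_no_edge_general (A : V → V → ℝ)
    (a b c : Finset V)
    (hab : Disjoint a b)
    (hpac : 0 < pPair A a c) (hpbc : 0 < pPair A b c) :
    dClus A (a ∪ b) c = (pClus A a + pClus A b) * pClus A c / (pPair A a c + pPair A b c) ∧
    (dClus A a c ≠ dClus A b c →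
      min (dClus A a c) (dClus A b c) < dClus A (a ∪ b) c) := by
  refine ⟨dClus_union_left A hab c, fun hne => ?_⟩
  rw [dClus_union_left A hab c, add_mul]
  exact min_div_div_lt_add_div_add hpac hpbc hne

/-- If there is no edge between disjoint clusters `a` and `b`, the merged distance to `c`
simplifies, and is strictly above `min(d(a,c), d(b,c))` when the two distances differ. -/
theorem merge_no_edge (A : V → V → ℝ)
    (hsym : ∀ i j, A i j = A j i) (hnn : ∀ i j, 0 ≤ A i j) (hw : 0 < totalW A)
    (a b c : Finset V)
    (hab : Disjoint a b) (hac : Disjoint a c) (hbc : Disjoint b c)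
    (hpa : 0 < pClus A a) (hpb : 0 < pClus A b) (hpc : 0 < pClus A c)
    (hpac : 0 < pPair A a c) (hpbc : 0 < pPair A b c)
    (hnoedge : pPair A a b = 0) :
    dClus A (a ∪ b) c = (pClus A a + pClus A b) * pClus A c / (pPair A a c + pPair A b c) ∧
    (dClus A a c ≠ dClus A b c →
      min (dClus A a c) (dClus A b c) < dClus A (a ∪ b) c) :=
  merge_no_edge_general A a b c hab hpac hpbc
end
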